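/- arXiv:1309.6072 — 2 statements merged into one kernel-verified Lean document; each statement's English description precedes it below -/
import Mathlib

section
/- Let a ∈ 𝔻, M ≥ 1, ε > 0, and suppose τ : 𝔻 → (0,∞) satisfies: (B) |τ(z) − τ(ζ)| ≤ c₂|z − ζ|, and (E) for each m ≥ 1 there are bₘ > 0 and 0 < tₘ < 1/m with τ(z) ≤ τ(ξ) + tₘ|z − ξ| whenever |z − ξ| > bₘτ(ξ). Then there exists β > 0 (depending only on M, ε, c₂ and the data in (E)) such that the function φ_a(z) = (M/4)·log(1 + |z − a|²/(β²τ(a)²)) satisfies |∂φ_a(z)|² ≤ ε/τ(z)² and Δφ_a(z) ≤ ε/τ(z)² for all z ∈ 𝔻. -/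
open Complex MeasureTheory Metric Set Filter

noncomputable section

def 𝔻 : Set ℂ := Metric.ball 0 1

/-- The Laplacian of a function `f : ℂ → ℝ`. -/
def lapl (f : ℂ → ℝ) (z : ℂ) : ℝ :=
  fderiv ℝ (fun w => fderiv ℝ f w 1) z 1 +
    fderiv ℝ (fun w => fderiv ℝ f w Complex.I) z Complex.I

/-- The Wirtinger derivative `∂ = (1/2)(∂/∂x - i ∂/∂y)` of `f : ℂ → ℝ`. -/
def wirt (f : ℂ → ℝ) (z : ℂ) : ℂ :=
  (1 / 2 : ℂ) * (((fderiv ℝ f z 1 : ℝ) : ℂ) - Complex.I * ((fderiv ℝ f z Complex.I : ℝ) : ℂ))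

/-- The class 𝓛 : positive, dominated by `c₁(1-|z|)`, Lipschitz with constant `c₂`. -/
structure IsClassL (τ : ℂ → ℝ) (c₁ c₂ : ℝ) : Prop where
  pos : ∀ z ∈ 𝔻, 0 < τ z
  bnd : ∀ z ∈ 𝔻, τ z ≤ c₁ * (1 - ‖z‖)
  lip : ∀ z ∈ 𝔻, ∀ ζ ∈ 𝔻, |τ z - τ ζ| ≤ c₂ * ‖z - ζ‖

/-- The class 𝓛* : `ω = e^{-2φ}` with `φ ∈ C²`, `Δφ > 0`, `(Δφ)^{-1/2} ≍ τ ∈ 𝓛`. -/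
structure IsClassLStar (ω φ τ : ℂ → ℝ) (c₁ c₂ : ℝ) : Prop where
  isL : IsClassL τ c₁ c₂
  weq : ∀ z ∈ 𝔻, ω z = Real.exp (-2 * φ z)
  smooth : ContDiffOn ℝ 2 φ 𝔻
  lapPos : ∀ z ∈ 𝔻, 0 < lapl φ z
  comp : ∃ C > 0, ∀ z ∈ 𝔻,
    C⁻¹ * τ z ≤ lapl φ z ^ (-(1 / 2) : ℝ) ∧ lapl φ z ^ (-(1 / 2) : ℝ) ≤ C * τ z

/-- Condition (E). -/
def ConditionE (τ : ℂ → ℝ) : Prop :=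
  ∀ m : ℕ, 1 ≤ m → ∃ b t : ℝ, 0 < b ∧ 0 < t ∧ t < 1 / m ∧
    ∀ z ∈ 𝔻, ∀ ξ ∈ 𝔻, b * τ ξ < ‖z - ξ‖ →
      τ z ≤ τ ξ + t * ‖z - ξ‖

/-- The class 𝓔 : class 𝓛* together with condition (E) for τ. -/
structure IsClassE (ω φ τ : ℂ → ℝ) (c₁ c₂ : ℝ) : Prop where
  isLStar : IsClassLStar ω φ τ c₁ c₂
  condE : ConditionE τ

/-- Membership in the weighted Bergman space `A^p(w)` on the unit disc. -/
def MemAp (p : ℝ) (w : ℂ → ℝ) (f : ℂ → ℂ) : Prop :=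
  DifferentiableOn ℂ f 𝔻 ∧
    IntegrableOn (fun z => ‖f z‖ ^ p * w z) 𝔻 volume

/-- `K` is the reproducing kernel of `A²(ω)`. -/
def IsRK (ω : ℂ → ℝ) (K : ℂ → ℂ → ℂ) : Prop :=
  ∀ z ∈ 𝔻, MemAp 2 ω (K z) ∧
    ∀ f : ℂ → ℂ, MemAp 2 ω f →
      f z = ∫ ξ in 𝔻, f ξ * (starRingEnd ℂ) (K z ξ) * (ω ξ : ℂ)

/-- The Bergman projection associated to the weight `ω` and kernel `K`. -/
def Pw (ω : ℂ → ℝ) (K : ℂ → ℂ → ℂ) (f : ℂ → ℂ) (z : ℂ) : ℂ :=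
  ∫ ξ in 𝔻, f ξ * (starRingEnd ℂ) (K z ξ) * (ω ξ : ℂ)

/-!
Writing `r = |z - a|` and `s = β²τ(a)²`, direct computation gives
`|∂φ_a(z)|² = (M/4)² r² / (s + r²)² ≤ M² / (s + r²)` and `Δφ_a(z) = M s / (s + r²)² ≤ M² / (s + r²)`,
so it suffices that `M² τ(z)² ≤ ε (s + r²)`. Near `a` (for `r ≤ b τ(a)`) the Lipschitz bound gives
`τ(z) ≤ (1 + |c₂| b) τ(a)`, and away from `a` condition (E) gives `τ(z) ≤ τ(a) + t r` with `t` as small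
as we like; hence `τ(z)² ≤ K τ(a)² + (ε / M²) r²` for some `K`, and `β² = M² K / ε` works.
-/

open scoped RealInnerProductSpace

section LogBump

variable {E : Type*} [NormedAddCommGroup E] [InnerProductSpace ℝ E]

-- The paper's `φ_a` is `logBump a (M / 4) (β ^ 2 * τ a ^ 2)`.
def logBump (a : E) (C s : ℝ) (w : E) : ℝ := C * Real.log (1 + ‖w - a‖ ^ 2 / s)

variable {a : E} {C s : ℝ}

theorem hasFDerivAt_sq_norm_sub (a z : E) :
    HasFDerivAt (fun w => ‖w - a‖ ^ 2) (2 • innerSL ℝ (z - a)) z := by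
  simpa using ((hasFDerivAt_id z).sub_const a).norm_sq

theorem hasFDerivAt_logBump (hs : 0 < s) (z : E) :
    HasFDerivAt (logBump a C s) ((2 * C / (s + ‖z - a‖ ^ 2)) • innerSL ℝ (z - a)) z := by
  have hpos : 0 < 1 + ‖z - a‖ ^ 2 / s := by positivity
  have harg : HasFDerivAt (fun w => 1 + ‖w - a‖ ^ 2 / s) (s⁻¹ • 2 • innerSL ℝ (z - a)) z := by
    simpa [div_eq_mul_inv, mul_comm] using ((hasFDerivAt_sq_norm_sub a z).const_mul s⁻¹).const_add 1
  refine ((harg.log hpos.ne').const_mul C).congr_fderiv ?_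
  ext v
  simp
  field_simp

theorem fderiv_logBump_apply (hs : 0 < s) (w v : E) :
    fderiv ℝ (logBump a C s) w v = 2 * C * ⟪w - a, v⟫ / (s + ‖w - a‖ ^ 2) := by
  rw [(hasFDerivAt_logBump hs w).fderiv]
  simp [inner_sub_left]
  ring

theorem fderiv_fderiv_logBump_apply (hs : 0 < s) (z v : E) :
    fderiv ℝ (fun w => fderiv ℝ (logBump a C s) w v) z v =
      2 * C * (‖v‖ ^ 2 * (s + ‖z - a‖ ^ 2) - 2 * ⟪z - a, v⟫ ^ 2) / (s + ‖z - a‖ ^ 2) ^ 2 := by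
  have hD : s + ‖z - a‖ ^ 2 ≠ 0 := by positivity
  have hnum : HasFDerivAt (fun w => 2 * C * ⟪w - a, v⟫) ((2 * C) • innerSL ℝ v) z := by
    refine ((((hasFDerivAt_id z).sub_const a).inner ℝ (hasFDerivAt_const v z)).const_mul
      (2 * C)).congr_fderiv ?_
    ext u
    simp [real_inner_comm]
  have hinv : HasFDerivAt (fun w => (s + ‖w - a‖ ^ 2)⁻¹)
      (-((s + ‖z - a‖ ^ 2) ^ 2)⁻¹ • 2 • innerSL ℝ (z - a)) z :=
    (hasDerivAt_inv hD).comp_hasFDerivAt z ((hasFDerivAt_sq_norm_sub a z).const_add s)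
  simp_rw [fderiv_logBump_apply hs, div_eq_mul_inv]
  rw [(hnum.fun_mul hinv).fderiv]
  simp [inner_sub_left]
  field_simp
  ring

end LogBump

theorem Complex.real_inner_one_right (w : ℂ) : ⟪w, 1⟫ = w.re := by simp [Complex.inner]

theorem Complex.real_inner_I_right (w : ℂ) : ⟪w, Complex.I⟫ = w.im := by simp [Complex.inner]

section LogBumpComplex

variable {a : ℂ} {C s : ℝ}

theorem wirt_logBump (hs : 0 < s) (z : ℂ) :
    wirt (logBump a C s) z = C * (starRingEnd ℂ) (z - a) / ((s + ‖z - a‖ ^ 2 : ℝ) : ℂ) := by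
  have hD : ((s + ‖z - a‖ ^ 2 : ℝ) : ℂ) ≠ 0 := by exact_mod_cast (by positivity : s + ‖z - a‖ ^ 2 ≠ 0)
  have hconj : (starRingEnd ℂ) (z - a) = (z - a).re - (z - a).im * Complex.I := by
    apply Complex.ext <;> simp
    ring
  rw [wirt, fderiv_logBump_apply hs, fderiv_logBump_apply hs, Complex.real_inner_one_right,
    Complex.real_inner_I_right, hconj]
  generalize s + ‖z - a‖ ^ 2 = D at hD ⊢
  push_cast
  field_simp

theorem sq_norm_wirt_logBump (hs : 0 < s) (z : ℂ) :
    ‖wirt (logBump a C s) z‖ ^ 2 = C ^ 2 * ‖z - a‖ ^ 2 / (s + ‖z - a‖ ^ 2) ^ 2 := by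
  rw [wirt_logBump hs, norm_div, norm_mul, Complex.norm_conj, Complex.norm_real, Complex.norm_real,
    Real.norm_of_nonneg (by positivity : 0 ≤ s + ‖z - a‖ ^ 2), Real.norm_eq_abs, div_pow, mul_pow,
    sq_abs]

theorem lapl_logBump (hs : 0 < s) (z : ℂ) :
    lapl (logBump a C s) z = 4 * C * s / (s + ‖z - a‖ ^ 2) ^ 2 := by
  have hD : s + ‖z - a‖ ^ 2 ≠ 0 := by positivity
  have hre_im : (z - a).re ^ 2 + (z - a).im ^ 2 = ‖z - a‖ ^ 2 := by
    rw [Complex.sq_norm, Complex.normSq_apply]; ring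
  rw [lapl, fderiv_fderiv_logBump_apply hs, fderiv_fderiv_logBump_apply hs]
  simp only [Complex.real_inner_one_right, Complex.real_inner_I_right, norm_one, Complex.norm_I,
    one_pow]
  rw [← hre_im]
  field_simp
  ring

theorem sq_norm_wirt_logBump_le (hs : 0 < s) (z : ℂ) :
    ‖wirt (logBump a C s) z‖ ^ 2 ≤ C ^ 2 / (s + ‖z - a‖ ^ 2) := by
  have hD : 0 < s + ‖z - a‖ ^ 2 := by positivity
  rw [sq_norm_wirt_logBump hs, div_le_div_iff₀ (by positivity) hD]
  nlinarith [sq_nonneg C, sq_nonneg ‖z - a‖, mul_nonneg (sq_nonneg C) hD.le]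

theorem lapl_logBump_le (hs : 0 < s) (hC : 0 ≤ C) (z : ℂ) :
    lapl (logBump a C s) z ≤ 4 * C / (s + ‖z - a‖ ^ 2) := by
  have hD : 0 < s + ‖z - a‖ ^ 2 := by positivity
  rw [lapl_logBump hs, div_le_div_iff₀ (by positivity) hD]
  nlinarith [sq_nonneg ‖z - a‖, mul_nonneg (mul_nonneg hC hs.le) (sq_nonneg ‖z - a‖)]

end LogBumpComplex

section ConditionE

variable {τ : ℂ → ℝ} {c₂ δ : ℝ}

theorem ConditionE.exists_le_mul_add_mul (hnonneg : ∀ z ∈ 𝔻, 0 ≤ τ z)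
    (hlip : ∀ z ∈ 𝔻, ∀ ζ ∈ 𝔻, |τ z - τ ζ| ≤ c₂ * ‖z - ζ‖) (hE : ConditionE τ) (hδ : 0 < δ) :
    ∃ K > 0, ∀ z ∈ 𝔻, ∀ ξ ∈ 𝔻, τ z ≤ K * τ ξ + δ * ‖z - ξ‖ := by
  obtain ⟨n, hn⟩ := exists_nat_one_div_lt hδ
  obtain ⟨b, t, hb, -, htn, hfar⟩ := hE (n + 1) (by omega)
  have ht : t ≤ δ := by
    have : t < 1 / ((n : ℝ) + 1) := by exact_mod_cast htn
    linarith
  refine ⟨1 + |c₂| * b, by positivity, fun z hz ξ hξ => ?_⟩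
  have hτξ := hnonneg ξ hξ
  rcases le_or_gt ‖z - ξ‖ (b * τ ξ) with hnear | hfar'
  · calc τ z ≤ τ ξ + c₂ * ‖z - ξ‖ := by linarith [(abs_le.mp (hlip z hz ξ hξ)).2]
      _ ≤ τ ξ + |c₂| * (b * τ ξ) := by gcongr; exact le_abs_self c₂
      _ ≤ (1 + |c₂| * b) * τ ξ + δ * ‖z - ξ‖ := by nlinarith [norm_nonneg (z - ξ)]
  · calc τ z ≤ τ ξ + t * ‖z - ξ‖ := hfar z hz ξ hξ hfar'
      _ ≤ (1 + |c₂| * b) * τ ξ + δ * ‖z - ξ‖ := by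
        gcongr
        exact le_mul_of_one_le_left hτξ (le_add_of_nonneg_right (by positivity))

theorem ConditionE.exists_sq_le_mul_add_mul (hnonneg : ∀ z ∈ 𝔻, 0 ≤ τ z)
    (hlip : ∀ z ∈ 𝔻, ∀ ζ ∈ 𝔻, |τ z - τ ζ| ≤ c₂ * ‖z - ζ‖) (hE : ConditionE τ) (hδ : 0 < δ) :
    ∃ K > 0, ∀ z ∈ 𝔻, ∀ ξ ∈ 𝔻, τ z ^ 2 ≤ K * τ ξ ^ 2 + δ * ‖z - ξ‖ ^ 2 := by
  obtain ⟨K, hK, hτ⟩ := hE.exists_le_mul_add_mul hnonneg hlip (Real.sqrt_pos.mpr (half_pos hδ))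
  refine ⟨2 * K ^ 2, by positivity, fun z hz ξ hξ => ?_⟩
  have hsq : Real.sqrt (δ / 2) ^ 2 = δ / 2 := Real.sq_sqrt (by positivity)
  calc τ z ^ 2 ≤ (K * τ ξ + Real.sqrt (δ / 2) * ‖z - ξ‖) ^ 2 :=
        pow_le_pow_left₀ (hnonneg z hz) (hτ z hz ξ hξ) 2
    _ ≤ 2 * (K * τ ξ) ^ 2 + 2 * (Real.sqrt (δ / 2) * ‖z - ξ‖) ^ 2 := by
        nlinarith [sq_nonneg (K * τ ξ - Real.sqrt (δ / 2) * ‖z - ξ‖)]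
    _ = 2 * K ^ 2 * τ ξ ^ 2 + δ * ‖z - ξ‖ ^ 2 := by rw [mul_pow _ ‖z - ξ‖, hsq]; ring

end ConditionE

theorem stmt2 (τ : ℂ → ℝ) (c₂ : ℝ)
    (hpos : ∀ z ∈ 𝔻, 0 < τ z)
    (hlip : ∀ z ∈ 𝔻, ∀ ζ ∈ 𝔻, |τ z - τ ζ| ≤ c₂ * ‖z - ζ‖)
    (hE : ConditionE τ)
    (a : ℂ) (ha : a ∈ 𝔻) (M ε : ℝ) (hM : 1 ≤ M) (hε : 0 < ε) :
    ∃ β > 0, ∀ z ∈ 𝔻,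
      ‖wirt (fun w => M / 4 *
          Real.log (1 + ‖w - a‖ ^ 2 / (β ^ 2 * τ a ^ 2))) z‖ ^ 2 ≤
        ε / τ z ^ 2 ∧
      lapl (fun w => M / 4 *
          Real.log (1 + ‖w - a‖ ^ 2 / (β ^ 2 * τ a ^ 2))) z ≤
        ε / τ z ^ 2 := by
  have hM0 : 0 < M := by linarith
  obtain ⟨K, hK, hτ⟩ := hE.exists_sq_le_mul_add_mul (fun z hz => (hpos z hz).le) hlip
    (div_pos hε (pow_pos hM0 2))
  refine ⟨Real.sqrt (M ^ 2 * K / ε), by positivity, fun z hz => ?_⟩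
  set s := Real.sqrt (M ^ 2 * K / ε) ^ 2 * τ a ^ 2 with hs_def
  have hs : 0 < s := by have := hpos a ha; positivity
  have hεs : ε * s = M ^ 2 * K * τ a ^ 2 := by
    rw [hs_def, Real.sq_sqrt (by positivity)]; field_simp
  have hD : 0 < s + ‖z - a‖ ^ 2 := by positivity
  have hkey : M ^ 2 / (s + ‖z - a‖ ^ 2) ≤ ε / τ z ^ 2 := by
    rw [div_le_div_iff₀ hD (pow_pos (hpos z hz) 2)]
    calc M ^ 2 * τ z ^ 2 ≤ M ^ 2 * (K * τ a ^ 2 + ε / M ^ 2 * ‖z - a‖ ^ 2) := by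
          gcongr; exact hτ z hz a ha
      _ = ε * (s + ‖z - a‖ ^ 2) := by rw [mul_add ε, hεs]; field_simp
  change ‖wirt (logBump a (M / 4) s) z‖ ^ 2 ≤ _ ∧ lapl (logBump a (M / 4) s) z ≤ _
  refine ⟨(sq_norm_wirt_logBump_le hs z).trans (le_trans ?_ hkey),
    (lapl_logBump_le hs (by positivity) z).trans (le_trans ?_ hkey)⟩
  · gcongr; nlinarith
  · gcongr; nlinarith
end
end

section
/- Let ω ∈ 𝓛* with associated function τ, 0 < p < ∞, β ∈ ℝ, and z ∈ 𝔻. Then there exist M ≥ 1 and δ₀ > 0 such that for every δ ∈ (0, δ₀) and every f holomorphic on a neighbourhood of the closed disc D(z, δτ(z)): |f(z)|^p ω(z)^β ≤ (M/(δ²τ(z)²)) ∫_{D(z, δτ(z))} |f(ξ)|^p ω(ξ)^β dA(ξ). -/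
open Complex MeasureTheory Metric Set Filter

noncomputable section

/-!
Near `z` the weight `ω ^ β = exp (-2βφ)` is continuous and positive, so on a small closed disc
around `z` it is bounded below by a fixed multiple of its value at `z`. The claim thus reduces to
the sub-mean value inequality `π R² |f(c)|^p ≤ 2^(2/p) ∫_{D(c,R)} |f|^p` for `f` holomorphic on
`D̄(c,R)`. For `p ≥ 1` it follows from the area mean value property and Jensen's inequality. For
`p < 1` (Hardy–Littlewood) let `w₀` maximise `(R - |w - c|)^(2/p) |f(w)|` on `D̄(c,R)`: on the disc
of radius `s = (R - |w₀ - c|)/2` around `w₀` this maximum bounds `|f|` by some `T`, and inserting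
`|f| ≤ T^(1-p) |f|^p` into the area mean value inequality at `w₀` gives the estimate.
-/

open Real

lemma integral_Ioo_neg_pi_pi_circleMap (g : ℂ → ℝ) (c : ℂ) (r : ℝ) :
    ∫ θ in Ioo (-π) π, g (circleMap c r θ) = 2 * π * circleAverage g c r := by
  have hper : Function.Periodic (fun θ => g (circleMap c r θ)) (2 * π) :=
    (periodic_circleMap c r).comp g
  have hshift := hper.intervalIntegral_add_eq (-π) 0
  rw [show -π + 2 * π = π by ring, zero_add] at hshift
  rw [circleAverage_def, smul_eq_mul, ← mul_assoc, mul_inv_cancel₀ two_pi_pos.ne', one_mul,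
    ← integral_Ioc_eq_integral_Ioo, ← intervalIntegral.integral_of_le (by linarith [pi_pos]),
    hshift]

lemma circleMap_eq_add_polarCoord_symm (c : ℂ) (q : ℝ × ℝ) :
    circleMap c q.1 q.2 = c + Complex.polarCoord.symm q := by
  simp only [Complex.polarCoord_symm_apply, circleMap, Complex.exp_mul_I]
  push_cast
  ring

theorem integral_ball_eq_integral_circleAverage {g : ℂ → ℝ} {c : ℂ} {R : ℝ}
    (hg : ContinuousOn g (closedBall c R)) :
    ∫ ξ in ball c R, g ξ = ∫ r in Ioo 0 R, 2 * π * r * circleAverage g c r := by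
  set h : ℝ × ℝ → ℝ := fun q => q.1 * g (circleMap c q.1 q.2)
  set S : Set (ℝ × ℝ) := Ioo 0 R ×ˢ Ioo (-π) π
  have hS : polarCoord.target ∩ (Iio R ×ˢ univ) = S := by
    rw [polarCoord_target, prod_inter_prod, Ioi_inter_Iio, inter_univ]
  have h_polar : ∫ ξ in ball c R, g ξ = ∫ q in S, h q := by
    rw [← (measurePreserving_add_left volume c).setIntegral_preimage_emb
      (measurableEmbedding_addLeft c), preimage_add_ball, sub_self,
      ← integral_indicator measurableSet_ball, ← Complex.integral_comp_polarCoord_symm, ← hS,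
      ← setIntegral_indicator (measurableSet_Iio.prod MeasurableSet.univ)]
    refine setIntegral_congr_fun polarCoord.open_target.measurableSet fun q hq => ?_
    have hq1 : 0 < q.1 := hq.1
    by_cases hqR : q.1 < R
    · have hmem : Complex.polarCoord.symm q ∈ ball (0 : ℂ) R := by
        simpa [abs_of_pos hq1] using hqR
      rw [indicator_of_mem (show q ∈ Iio R ×ˢ univ from ⟨hqR, trivial⟩), indicator_of_mem hmem,
        smul_eq_mul, ← circleMap_eq_add_polarCoord_symm]
    · have hmem : Complex.polarCoord.symm q ∉ ball (0 : ℂ) R := by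
        simpa [abs_of_pos hq1] using hqR
      rw [indicator_of_notMem (show q ∉ Iio R ×ˢ univ from fun h => hqR h.1),
        indicator_of_notMem hmem, smul_zero]
  have h_int : IntegrableOn h S (volume.prod volume) := by
    refine (ContinuousOn.integrableOn_compact (isCompact_Icc.prod isCompact_Icc) ?_).mono_set
      (prod_mono Ioo_subset_Icc_self Ioo_subset_Icc_self)
    refine continuousOn_fst.mul (hg.comp (by fun_prop) ?_)
    rintro ⟨r, θ⟩ ⟨hr, -⟩
    exact closedBall_subset_closedBall hr.2 (circleMap_mem_closedBall c hr.1 θ)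
  rw [h_polar, Measure.volume_eq_prod, setIntegral_prod _ h_int]
  refine setIntegral_congr_fun measurableSet_Ioo fun r _ => ?_
  rw [integral_const_mul, integral_Ioo_neg_pi_pi_circleMap]
  ring

lemma norm_circleAverage_le {E : Type*} [NormedAddCommGroup E] [NormedSpace ℝ E]
    (f : ℂ → E) (c : ℂ) (r : ℝ) :
    ‖circleAverage f c r‖ ≤ circleAverage (fun w => ‖f w‖) c r := by
  rw [circleAverage_def, circleAverage_def, norm_smul, smul_eq_mul, norm_inv,
    Real.norm_of_nonneg two_pi_pos.le]
  gcongr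
  exact intervalIntegral.norm_integral_le_integral_norm two_pi_pos.le

lemma norm_le_circleAverage_norm {f : ℂ → ℂ} {c : ℂ} {r : ℝ}
    (hf : DifferentiableOn ℂ f (closedBall c |r|)) :
    ‖f c‖ ≤ circleAverage (fun w => ‖f w‖) c r := by
  rw [← (hf.diffContOnCl_ball subset_rfl).circleAverage]
  exact norm_circleAverage_le f c r

theorem mul_norm_le_integral_ball_norm {f : ℂ → ℂ} {c : ℂ} {R : ℝ} (hR : 0 ≤ R)
    (hf : DifferentiableOn ℂ f (closedBall c R)) :
    π * R ^ 2 * ‖f c‖ ≤ ∫ ξ in ball c R, ‖f ξ‖ := by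
  have h_avg : ContinuousOn (circleAverage (fun w => ‖f w‖) c) (Icc 0 R) :=
    (hf.continuousOn.norm.mono fun w hw => by simpa [dist_eq_norm] using hw.2).circleAverage
      fun r hr => hr.1
  have h_lhs : ∫ r in Ioo 0 R, 2 * π * r * ‖f c‖ = π * R ^ 2 * ‖f c‖ := by
    rw [integral_mul_const, integral_const_mul, ← integral_Ioc_eq_integral_Ioo,
      ← intervalIntegral.integral_of_le hR, integral_id]
    ring
  rw [integral_ball_eq_integral_circleAverage hf.continuousOn.norm, ← h_lhs]
  refine setIntegral_mono_on ?_ ?_ measurableSet_Ioo fun r hr => ?_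
  · exact (continuous_const.mul continuous_id |>.mul continuous_const).integrableOn_Icc.mono_set
      Ioo_subset_Icc_self
  · exact ((continuousOn_const.mul continuousOn_id).mul h_avg).integrableOn_Icc.mono_set
      Ioo_subset_Icc_self
  · have hr0 : 0 < r := hr.1
    gcongr
    exact norm_le_circleAverage_norm
      (hf.mono (closedBall_subset_closedBall (by rw [abs_of_pos hr0]; exact hr.2.le)))

lemma measureReal_ball_complex (c : ℂ) {R : ℝ} (hR : 0 ≤ R) :
    volume.real (ball c R) = π * R ^ 2 := by
  rw [measureReal_def, Complex.volume_ball, ENNReal.toReal_mul, ENNReal.toReal_pow,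
    ENNReal.toReal_ofReal hR, ENNReal.coe_toReal, NNReal.coe_real_pi, mul_comm]

lemma integrableOn_ball_rpow_norm {f : ℂ → ℂ} {c : ℂ} {R : ℝ} (p : ℝ) (hp : 0 ≤ p)
    (hf : ContinuousOn f (closedBall c R)) :
    IntegrableOn (fun ξ => ‖f ξ‖ ^ p) (ball c R) :=
  ((hf.norm.rpow_const fun _ _ => Or.inr hp).integrableOn_compact
    (isCompact_closedBall c R)).mono_set ball_subset_closedBall

theorem mul_rpow_norm_le_integral_ball_of_one_le {f : ℂ → ℂ} {c : ℂ} {R p : ℝ} (hp : 1 ≤ p)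
    (hR : 0 < R) (hf : DifferentiableOn ℂ f (closedBall c R)) :
    π * R ^ 2 * ‖f c‖ ^ p ≤ ∫ ξ in ball c R, ‖f ξ‖ ^ p := by
  have hV : 0 < π * R ^ 2 := by positivity
  have h_mean : ‖f c‖ ≤ ⨍ ξ in ball c R, ‖f ξ‖ := by
    rw [setAverage_eq, measureReal_ball_complex c hR.le, smul_eq_mul, le_inv_mul_iff₀ hV]
    exact mul_norm_le_integral_ball_norm hR.le hf
  have h_jensen : (⨍ ξ in ball c R, ‖f ξ‖) ^ p ≤ ⨍ ξ in ball c R, ‖f ξ‖ ^ p :=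
    (convexOn_rpow hp).map_set_average_le
      (continuousOn_id.rpow_const fun _ _ => Or.inr (by linarith)) isClosed_Ici
      (measure_ball_pos volume c hR).ne' measure_ball_lt_top.ne
      (Eventually.of_forall fun ξ => norm_nonneg (f ξ))
      (by simpa using integrableOn_ball_rpow_norm 1 zero_le_one hf.continuousOn)
      (integrableOn_ball_rpow_norm p (by linarith) hf.continuousOn)
  rw [setAverage_eq volume (fun ξ => ‖f ξ‖ ^ p), measureReal_ball_complex c hR.le,
    smul_eq_mul] at h_jensen
  rw [← le_inv_mul_iff₀ hV]
  calc ‖f c‖ ^ p ≤ (⨍ ξ in ball c R, ‖f ξ‖) ^ p := by gcongr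
    _ ≤ _ := h_jensen

lemma le_rpow_one_sub_mul_rpow {x T p : ℝ} (hx : 0 ≤ x) (hxT : x ≤ T) (hp : p ≤ 1) :
    x ≤ T ^ (1 - p) * x ^ p := by
  rcases hx.eq_or_lt with rfl | hx
  · exact mul_nonneg (rpow_nonneg (hx.trans hxT) _) (rpow_nonneg le_rfl _)
  calc x = x ^ (1 - p) * x ^ p := by rw [← rpow_add hx, sub_add_cancel, rpow_one]
    _ ≤ T ^ (1 - p) * x ^ p := by gcongr

theorem mul_norm_le_rpow_mul_integral_ball {f : ℂ → ℂ} {c : ℂ} {R p T : ℝ} (hp : 0 ≤ p)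
    (hp1 : p ≤ 1) (hR : 0 ≤ R) (hf : DifferentiableOn ℂ f (closedBall c R))
    (hT : ∀ w ∈ ball c R, ‖f w‖ ≤ T) :
    π * R ^ 2 * ‖f c‖ ≤ T ^ (1 - p) * ∫ ξ in ball c R, ‖f ξ‖ ^ p :=
  calc π * R ^ 2 * ‖f c‖ ≤ ∫ ξ in ball c R, ‖f ξ‖ := mul_norm_le_integral_ball_norm hR hf
    _ ≤ ∫ ξ in ball c R, T ^ (1 - p) * ‖f ξ‖ ^ p :=
        setIntegral_mono_on
          (by simpa using integrableOn_ball_rpow_norm 1 zero_le_one hf.continuousOn)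
          ((integrableOn_ball_rpow_norm p hp hf.continuousOn).const_mul _) measurableSet_ball
          fun w hw => le_rpow_one_sub_mul_rpow (norm_nonneg _) (hT w hw) hp1
    _ = T ^ (1 - p) * ∫ ξ in ball c R, ‖f ξ‖ ^ p := integral_const_mul _ _

lemma rpow_le_of_le_mul_rpow_one_sub {A K p : ℝ} (hA : 0 < A) (h : A ≤ K * A ^ (1 - p)) :
    A ^ p ≤ K := by
  rwa [← mul_le_mul_iff_of_pos_right (rpow_pos_of_pos hA (1 - p)), ← rpow_add hA,
    add_sub_cancel, rpow_one]

theorem exists_ball_norm_le_of_isMaxOn {f : ℂ → ℂ} {c : ℂ} {R κ : ℝ} (hκ : 0 < κ)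
    (hR : 0 < R) (hf : ContinuousOn f (closedBall c R)) (hfc : f c ≠ 0) :
    ∃ w₀ s, 0 < s ∧ s + dist w₀ c ≤ R ∧
      R ^ κ * ‖f c‖ ≤ (2 * s) ^ κ * ‖f w₀‖ ∧
      ∀ w ∈ ball w₀ s, s ^ κ * ‖f w‖ ≤ (2 * s) ^ κ * ‖f w₀‖ := by
  set g : ℂ → ℝ := fun w => (R - dist w c) ^ κ * ‖f w‖
  have hg : ContinuousOn g (closedBall c R) :=
    ((continuousOn_const.sub (continuous_id.dist continuous_const).continuousOn).rpow_const
      fun _ _ => Or.inr hκ.le).mul hf.norm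
  obtain ⟨w₀, hw₀, hmax⟩ := (isCompact_closedBall c R).exists_isMaxOn
    ⟨c, mem_closedBall_self hR.le⟩ hg
  set s := (R - dist w₀ c) / 2 with hs_def
  have hA : g w₀ = (2 * s) ^ κ * ‖f w₀‖ := by simp only [g, hs_def]; ring_nf
  have hcA : R ^ κ * ‖f c‖ ≤ g w₀ := by
    simpa [g] using hmax (mem_closedBall_self hR.le)
  have hs : 0 < s := by
    have hpos : 0 < (2 * s) ^ κ * ‖f w₀‖ := hA ▸ hcA.trans_lt' (by positivity)
    by_contra! hs
    have hs0 : 2 * s = 0 := by linarith [sub_nonneg.mpr (mem_closedBall.mp hw₀)]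
    simp [hs0, zero_rpow hκ.ne'] at hpos
  refine ⟨w₀, s, hs, by linarith, hA ▸ hcA, fun w hw => ?_⟩
  have hwc : s ≤ R - dist w c := by
    linarith [dist_triangle w w₀ c, mem_ball.mp hw, dist_comm w w₀]
  calc s ^ κ * ‖f w‖ ≤ (R - dist w c) ^ κ * ‖f w‖ := by gcongr
    _ ≤ g w₀ := hmax (closedBall_subset_closedBall' (by linarith) (ball_subset_closedBall hw))
    _ = _ := hA

theorem mul_rpow_norm_le_integral_ball_of_le_one {f : ℂ → ℂ} {c : ℂ} {R p : ℝ} (hp : 0 < p)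
    (hp1 : p ≤ 1) (hR : 0 < R) (hf : DifferentiableOn ℂ f (closedBall c R)) :
    π * R ^ 2 * ‖f c‖ ^ p ≤ 2 ^ (2 / p) * ∫ ξ in ball c R, ‖f ξ‖ ^ p := by
  set κ := 2 / p
  have hκp : ∀ x : ℝ, 0 ≤ x → (x ^ κ) ^ p = x ^ 2 := fun x hx => by
    rw [← rpow_mul hx, div_mul_cancel₀ 2 hp.ne', rpow_two]
  set I := ∫ ξ in ball c R, ‖f ξ‖ ^ p
  rcases eq_or_ne (f c) 0 with hfc | hfc
  · rw [hfc, norm_zero, zero_rpow hp.ne', mul_zero]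
    positivity
  obtain ⟨w₀, s, hs, hsR, hcA, h_bound⟩ :=
    exists_ball_norm_le_of_isMaxOn (κ := κ) (by positivity) hR hf.continuousOn hfc
  set A := (2 * s) ^ κ * ‖f w₀‖
  set σ := s ^ κ
  have hσ : 0 < σ := rpow_pos_of_pos hs κ
  have hA : 0 < A := hcA.trans_lt' (by positivity [norm_pos_iff.mpr hfc])
  have h_local : π * s ^ 2 * ‖f w₀‖ ≤ (A / σ) ^ (1 - p) * I :=
    calc π * s ^ 2 * ‖f w₀‖ ≤ (A / σ) ^ (1 - p) * ∫ ξ in ball w₀ s, ‖f ξ‖ ^ p :=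
          mul_norm_le_rpow_mul_integral_ball hp.le hp1 hs.le
            (hf.mono (closedBall_subset_closedBall' hsR))
            fun w hw => (le_div_iff₀' hσ).mpr (h_bound w hw)
      _ ≤ (A / σ) ^ (1 - p) * I := by
          gcongr
          exact setIntegral_mono_set (integrableOn_ball_rpow_norm p hp.le hf.continuousOn)
            (Eventually.of_forall fun ξ => rpow_nonneg (norm_nonneg _) p)
            (ball_subset_ball' hsR).eventuallyLE
  have h_key : A ≤ 2 ^ κ * I / π * A ^ (1 - p) := by
    have hσ_cancel : σ * (A / σ) ^ (1 - p) = s ^ 2 * A ^ (1 - p) := by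
      have hσp : σ / σ ^ (1 - p) = σ ^ p := by
        rw [div_eq_iff (rpow_pos_of_pos hσ _).ne', ← rpow_add hσ, add_sub_cancel, rpow_one]
      rw [div_rpow hA.le hσ.le, mul_div_left_comm, hσp, hκp s hs.le, mul_comm]
    rw [← mul_le_mul_iff_of_pos_left (by positivity : 0 < π * s ^ 2)]
    calc π * s ^ 2 * A = 2 ^ κ * σ * (π * s ^ 2 * ‖f w₀‖) := by
          simp only [A, σ, mul_rpow zero_le_two hs.le]; ring
      _ ≤ 2 ^ κ * σ * ((A / σ) ^ (1 - p) * I) := by gcongr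
      _ = π * s ^ 2 * (2 ^ κ * I / π * A ^ (1 - p)) := by
        rw [mul_assoc _ σ, ← mul_assoc σ, hσ_cancel]
        field_simp
  calc π * R ^ 2 * ‖f c‖ ^ p = π * (R ^ κ * ‖f c‖) ^ p := by
        rw [mul_rpow (by positivity) (norm_nonneg _), hκp R hR.le, mul_assoc]
    _ ≤ π * A ^ p := by gcongr
    _ ≤ π * (2 ^ κ * I / π) := by gcongr; exact rpow_le_of_le_mul_rpow_one_sub hA h_key
    _ = 2 ^ κ * I := by field_simp

theorem mul_rpow_norm_le_integral_ball {f : ℂ → ℂ} {c : ℂ} {R p : ℝ} (hp : 0 < p) (hR : 0 < R)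
    (hf : DifferentiableOn ℂ f (closedBall c R)) :
    π * R ^ 2 * ‖f c‖ ^ p ≤ 2 ^ (2 / p) * ∫ ξ in ball c R, ‖f ξ‖ ^ p := by
  rcases le_total p 1 with hp1 | hp1
  · exact mul_rpow_norm_le_integral_ball_of_le_one hp hp1 hR hf
  · refine (mul_rpow_norm_le_integral_ball_of_one_le hp1 hR hf).trans
      (le_mul_of_one_le_left ?_ (one_le_rpow one_le_two (by positivity)))
    exact setIntegral_nonneg measurableSet_ball fun ξ _ => rpow_nonneg (norm_nonneg _) p

theorem rpow_norm_mul_le_integral_ball_mul {f : ℂ → ℂ} {w : ℂ → ℝ} {c : ℂ} {R p C : ℝ}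
    (hp : 0 < p) (hR : 0 < R) (hf : DifferentiableOn ℂ f (closedBall c R))
    (hw : ContinuousOn w (closedBall c R)) (hwc : 0 ≤ w c)
    (hC : ∀ ξ ∈ closedBall c R, w c ≤ C * w ξ) :
    ‖f c‖ ^ p * w c ≤ 2 ^ (2 / p) * C / π / R ^ 2 * ∫ ξ in ball c R, ‖f ξ‖ ^ p * w ξ := by
  have hV : 0 < π * R ^ 2 := by positivity
  have hIp := integrableOn_ball_rpow_norm p hp.le hf.continuousOn
  have hIpw : IntegrableOn (fun ξ => ‖f ξ‖ ^ p * w ξ) (ball c R) :=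
    (((hf.continuousOn.norm.rpow_const fun _ _ => Or.inr hp.le).mul hw).integrableOn_compact
      (isCompact_closedBall c R)).mono_set ball_subset_closedBall
  rw [div_div, div_mul_eq_mul_div, le_div_iff₀' hV]
  calc π * R ^ 2 * (‖f c‖ ^ p * w c) = π * R ^ 2 * ‖f c‖ ^ p * w c := by ring
    _ ≤ 2 ^ (2 / p) * (∫ ξ in ball c R, ‖f ξ‖ ^ p) * w c :=
        mul_le_mul_of_nonneg_right (mul_rpow_norm_le_integral_ball hp hR hf) hwc
    _ = 2 ^ (2 / p) * ∫ ξ in ball c R, w c * ‖f ξ‖ ^ p := by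
        rw [integral_const_mul]; ring
    _ ≤ 2 ^ (2 / p) * ∫ ξ in ball c R, C * (‖f ξ‖ ^ p * w ξ) := by
        refine mul_le_mul_of_nonneg_left (setIntegral_mono_on (hIp.const_mul _)
          (hIpw.const_mul _) measurableSet_ball fun ξ hξ => ?_) (by positivity)
        calc w c * ‖f ξ‖ ^ p ≤ C * w ξ * ‖f ξ‖ ^ p := by
              gcongr
              exact hC ξ (ball_subset_closedBall hξ)
          _ = C * (‖f ξ‖ ^ p * w ξ) := by ring
    _ = 2 ^ (2 / p) * C * ∫ ξ in ball c R, ‖f ξ‖ ^ p * w ξ := by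
        rw [integral_const_mul]; ring

lemma IsCompact.exists_le_mul_of_continuousOn {X : Type*} [TopologicalSpace X] {K : Set X}
    {w : X → ℝ} {z : X} (hK : IsCompact K) (hw : ContinuousOn w K) (hpos : ∀ x ∈ K, 0 < w x)
    (hz : z ∈ K) : ∃ C, ∀ x ∈ K, w z ≤ C * w x := by
  obtain ⟨m, hm, hmin⟩ := hK.exists_isMinOn ⟨z, hz⟩ hw
  refine ⟨w z / w m, fun x hx => ?_⟩
  rw [div_mul_eq_mul_div, le_div_iff₀ (hpos m hm)]
  exact mul_le_mul_of_nonneg_left (hmin hx) (hpos z hz).le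

lemma IsClassLStar.pos {ω φ τ : ℂ → ℝ} {c₁ c₂ : ℝ} (hω : IsClassLStar ω φ τ c₁ c₂) :
    ∀ ξ ∈ 𝔻, 0 < ω ξ :=
  fun ξ hξ => hω.weq ξ hξ ▸ exp_pos _

lemma IsClassLStar.continuousOn {ω φ τ : ℂ → ℝ} {c₁ c₂ : ℝ} (hω : IsClassLStar ω φ τ c₁ c₂) :
    ContinuousOn ω 𝔻 :=
  (continuous_exp.comp_continuousOn (continuousOn_const.mul hω.smooth.continuousOn)).congr hω.weq

theorem stmt4 (ω φ τ : ℂ → ℝ) (c₁ c₂ : ℝ) (hω : IsClassLStar ω φ τ c₁ c₂)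
    (p : ℝ) (hp : 0 < p) (β : ℝ) (z : ℂ) (hz : z ∈ 𝔻) :
    ∃ M : ℝ, 1 ≤ M ∧ ∃ δ₀ > 0, ∀ δ : ℝ, 0 < δ → δ < δ₀ →
      ∀ (f : ℂ → ℂ) (U : Set ℂ), IsOpen U →
        Metric.closedBall z (δ * τ z) ⊆ U → DifferentiableOn ℂ f U →
        ‖f z‖ ^ p * ω z ^ β ≤
          M / (δ ^ 2 * τ z ^ 2) *
            ∫ ξ in Metric.ball z (δ * τ z), ‖f ξ‖ ^ p * ω ξ ^ β := by
  obtain ⟨ρ, hρ, hK⟩ : ∃ ρ > 0, closedBall z ρ ⊆ 𝔻 :=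
    nhds_basis_closedBall.mem_iff.mp (isOpen_ball.mem_nhds hz)
  have hw_cont : ContinuousOn (fun ξ => ω ξ ^ β) 𝔻 :=
    hω.continuousOn.rpow_const fun ξ hξ => Or.inl (hω.pos ξ hξ).ne'
  obtain ⟨C, hC⟩ := (isCompact_closedBall z ρ).exists_le_mul_of_continuousOn (hw_cont.mono hK)
    (fun ξ hξ => rpow_pos_of_pos (hω.pos ξ (hK hξ)) β) (mem_closedBall_self hρ.le)
  have hτ : 0 < τ z := hω.isL.pos z hz
  refine ⟨max 1 (2 ^ (2 / p) * C / π), le_max_left _ _, ρ / τ z, by positivity,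
    fun δ hδ hδρ f U _ hU hf => ?_⟩
  have hr : 0 < δ * τ z := by positivity
  have hrρ : closedBall z (δ * τ z) ⊆ closedBall z ρ :=
    closedBall_subset_closedBall ((lt_div_iff₀ hτ).mp hδρ).le
  have h_int_nonneg : 0 ≤ ∫ ξ in ball z (δ * τ z), ‖f ξ‖ ^ p * ω ξ ^ β :=
    setIntegral_nonneg measurableSet_ball fun ξ hξ => mul_nonneg (rpow_nonneg (norm_nonneg _) p)
      (rpow_nonneg (hω.pos ξ (hK (hrρ (ball_subset_closedBall hξ)))).le β)
  calc ‖f z‖ ^ p * ω z ^ β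
      ≤ 2 ^ (2 / p) * C / π / (δ * τ z) ^ 2 * ∫ ξ in ball z (δ * τ z), ‖f ξ‖ ^ p * ω ξ ^ β :=
        rpow_norm_mul_le_integral_ball_mul hp hr (hf.mono hU) (hw_cont.mono (hrρ.trans hK))
          (rpow_nonneg (hω.pos z hz).le β) fun ξ hξ => hC ξ (hrρ hξ)
    _ ≤ _ := by
        rw [mul_pow]
        gcongr
        exact le_max_right _ _
end
end
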